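/- Let n ≥ 1, let Q be the quadratic form on ℝⁿ given by Q(v) = −‖v‖², let ι : ℝⁿ → CliffordAlgebra Q be the canonical embedding, and let (e_i) be the standard orthonormal basis of ℝⁿ. Let f(x) = 2/(1+‖x‖²), let ε > 0, let φ₀ ∈ CliffordAlgebra Q be a fixed (constant) element, and choose a sign ∓. Define φ : ℝⁿ → CliffordAlgebra Q by φ(x) = f(x/ε)^{n/2} • ((1 ∓ ε^{-1} • ι(x)) * φ₀). Then φ satisfies the Killing-type Dirac equation ∑_i ι(e_i) * (fderiv ℝ φ x (e_i)) = ±(n/(2ε)) · f(x/ε) • φ(x) for every x ∈ ℝⁿ (with eigenvalue +(n/(2ε))f for the choice (1 − ε^{-1}ι(x)) and −(n/(2ε))f for (1 + ε^{-1}ι(x))). -/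

import Mathlib

/-!
Write `φ = g • m` with `g y = f (ε⁻¹ • y) ^ (n / 2)` and `m y = (1 - σ ε⁻¹ ι y) φ₀`.
The Dirac operator obeys the Leibniz rule `D (g • m) = ι (∇g) * m + g • D m`; the Clifford
relation `ι(eᵢ)² = -1` gives `D m = n σ ε⁻¹ φ₀`, and `∇g (y) = -(n / (2ε²)) f (ε⁻¹ • y) g y • y`.
Since `ι y * (1 - c ι y) = ι y + c ‖y‖²`, the identity `f(y)(1 + ‖y‖²) = 2` together with
`σ² = 1` collapses `D φ` to the eigenvalue equation.
-/

section ConformalFactor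

variable {E : Type*} [NormedAddCommGroup E]

noncomputable def conformalFactor (x : E) : ℝ :=
  2 / (1 + ‖x‖ ^ 2)

lemma conformalFactor_pos (x : E) : 0 < conformalFactor x := by
  unfold conformalFactor; positivity

lemma conformalFactor_mul_one_add_norm_sq (x : E) : conformalFactor x * (1 + ‖x‖ ^ 2) = 2 := by
  unfold conformalFactor; field_simp

variable [InnerProductSpace ℝ E] [CompleteSpace E]

lemma hasGradientAt_conformalFactor (x : E) :
    HasGradientAt conformalFactor (-conformalFactor x ^ 2 • x) x := by
  have hN : HasFDerivAt (fun y : E => 1 + ‖y‖ ^ 2) (2 • innerSL ℝ x) x := by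
    simpa using ((hasFDerivAt_id x).norm_sq).const_add 1
  have hN0 : 1 + ‖x‖ ^ 2 ≠ 0 := by positivity
  have h : HasFDerivAt (fun y : E => 2 * (1 + ‖y‖ ^ 2)⁻¹) _ x :=
    ((hasDerivAt_inv hN0).comp_hasFDerivAt x hN).const_mul 2
  rw [hasGradientAt_iff_hasFDerivAt]
  unfold conformalFactor
  simp only [div_eq_mul_inv]
  refine h.congr_fderiv ?_
  ext v
  simp only [neg_smul, smul_neg, neg_apply, smul_apply, coe_innerSL_apply, nsmul_eq_mul,
    Nat.cast_ofNat, smul_eq_mul, map_neg, map_smul, InnerProductSpace.toDual_apply_apply, neg_inj]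
  field_simp

lemma hasGradientAt_conformalFactor_inv_smul_rpow (ε r : ℝ) (x : E) :
    HasGradientAt (fun y => conformalFactor (ε⁻¹ • y) ^ r)
      ((-(r * ε⁻¹ ^ 2 * conformalFactor (ε⁻¹ • x))) • conformalFactor (ε⁻¹ • x) ^ r • x) x := by
  have hF := conformalFactor_pos (ε⁻¹ • x)
  have hscale : HasFDerivAt (fun y : E => ε⁻¹ • y) (ε⁻¹ • ContinuousLinearMap.id ℝ E) x :=
    (hasFDerivAt_id x).const_smul ε⁻¹
  have h : HasFDerivAt (fun y => conformalFactor (ε⁻¹ • y) ^ r) _ x :=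
    ((hasGradientAt_conformalFactor (ε⁻¹ • x)).hasFDerivAt.comp x hscale).rpow_const
      (p := r) (Or.inl hF.ne')
  rw [hasGradientAt_iff_hasFDerivAt]
  refine h.congr_fderiv ?_
  ext v
  simp only [Function.comp_apply, neg_smul, map_neg, map_smul, ContinuousLinearMap.comp_smulₛₗ,
    map_inv₀, Real.ringHom_apply, ContinuousLinearMap.comp_id, smul_neg, neg_apply, smul_apply,
    InnerProductSpace.toDual_apply_apply, smul_eq_mul, inv_pow, neg_inj]
  rw [Real.rpow_sub_one hF.ne']
  field_simp

end ConformalFactor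

section Dirac

variable {d : Type*} [Fintype d]
  {A : Type*} [NormedRing A] [NormedAlgebra ℝ A] (ι : EuclideanSpace ℝ d →ₗ[ℝ] A)

lemma hasFDerivAt_one_sub_smul_mul (c : ℝ) (a : A) (x : EuclideanSpace ℝ d) :
    HasFDerivAt (fun y => (1 - c • ι y) * a)
      (((ContinuousLinearMap.mul ℝ A).flip a).comp
        (-(c • LinearMap.toContinuousLinearMap ι))) x :=
  (((LinearMap.toContinuousLinearMap ι).hasFDerivAt.const_smul c).const_sub 1).mul_const' a

variable {ι} in
lemma map_mul_one_sub_smul_mul (hι : ∀ v, ι v * ι v = algebraMap ℝ A (-‖v‖ ^ 2)) (c : ℝ)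
    (v : EuclideanSpace ℝ d) (a : A) :
    ι v * ((1 - c • ι v) * a) = ι v * a + (c * ‖v‖ ^ 2) • a := by
  rw [← mul_assoc, mul_sub, mul_one, mul_smul_comm, hι, sub_mul, smul_mul_assoc,
    Algebra.algebraMap_eq_smul_one, smul_mul_assoc, one_mul, smul_smul]
  module

variable [DecidableEq d]

noncomputable def diracOp (φ : EuclideanSpace ℝ d → A) (x : EuclideanSpace ℝ d) : A :=
  ∑ i, ι (EuclideanSpace.single i 1) * fderiv ℝ φ x (EuclideanSpace.single i 1)

omit [NormedRing A] [NormedAlgebra ℝ A] in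
lemma sum_smul_map_single {M : Type*} [AddCommGroup M] [Module ℝ M]
    (ι : EuclideanSpace ℝ d →ₗ[ℝ] M) (v : EuclideanSpace ℝ d) :
    ∑ i, v i • ι (EuclideanSpace.single i 1) = ι v := by
  conv_rhs => rw [← (EuclideanSpace.basisFun d ℝ).sum_repr v]
  simp

variable {ι} in
lemma map_single_mul_self (hι : ∀ v, ι v * ι v = algebraMap ℝ A (-‖v‖ ^ 2)) (i : d) :
    ι (EuclideanSpace.single i 1) * ι (EuclideanSpace.single i 1) = -1 := by
  simp [hι]

theorem diracOp_smul {g : EuclideanSpace ℝ d → ℝ} {w : EuclideanSpace ℝ d}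
    {m : EuclideanSpace ℝ d → A} {x : EuclideanSpace ℝ d}
    (hg : HasGradientAt g w x) (hm : DifferentiableAt ℝ m x) :
    diracOp ι (fun y => g y • m y) x = ι w * m x + g x • diracOp ι m x := by
  have hderiv (i : d) : fderiv ℝ (fun y => g y • m y) x (EuclideanSpace.single i 1) =
      g x • fderiv ℝ m x (EuclideanSpace.single i 1) + w i • m x := by
    rw [(hg.hasFDerivAt.fun_smul hm.hasFDerivAt).fderiv]
    simp [EuclideanSpace.inner_single_right]
  simp only [diracOp, hderiv, mul_add, Finset.sum_add_distrib, mul_smul_comm, ← Finset.smul_sum]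
  rw [add_comm]
  congr 1
  simp only [← smul_mul_assoc, ← Finset.sum_mul, sum_smul_map_single]

theorem diracOp_one_sub_smul_mul (hι : ∀ v, ι v * ι v = algebraMap ℝ A (-‖v‖ ^ 2))
    (c : ℝ) (a : A) (x : EuclideanSpace ℝ d) :
    diracOp ι (fun y => (1 - c • ι y) * a) x = (Fintype.card d * c) • a := by
  simp only [diracOp, (hasFDerivAt_one_sub_smul_mul ι c a x).fderiv]
  simp [← mul_assoc, map_single_mul_self hι, ← Nat.cast_smul_eq_nsmul ℝ, smul_smul, mul_comm]

end Dirac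

theorem killing_type_dirac_equation_general (n : ℕ)
    (A : Type*) [NormedRing A] [NormedAlgebra ℝ A]
    (ι : EuclideanSpace ℝ (Fin n) →ₗ[ℝ] A)
    (hι : ∀ v : EuclideanSpace ℝ (Fin n), ι v * ι v = algebraMap ℝ A (-‖v‖ ^ 2))
    (f : EuclideanSpace ℝ (Fin n) → ℝ)
    (hf : ∀ x, f x = 2 / (1 + ‖x‖ ^ 2))
    (ε : ℝ) (φ₀ : A)
    (σ : ℝ) (hσ : σ = 1 ∨ σ = -1)
    (φ : EuclideanSpace ℝ (Fin n) → A)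
    (hφ : ∀ x, φ x =
      (f (ε⁻¹ • x)) ^ ((n : ℝ) / 2) • (((1 : A) - σ • (ε⁻¹ • ι x)) * φ₀))
    (x : EuclideanSpace ℝ (Fin n)) :
    ∑ i : Fin n,
      ι (EuclideanSpace.single i (1 : ℝ)) *
        fderiv ℝ φ x (EuclideanSpace.single i (1 : ℝ)) =
      (σ * (n / (2 * ε)) * f (ε⁻¹ • x)) • φ x := by
  have hf' : f = conformalFactor := funext hf
  have hφ' : φ = fun y =>
      conformalFactor (ε⁻¹ • y) ^ ((n : ℝ) / 2) • ((1 - (σ * ε⁻¹) • ι y) * φ₀) := by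
    funext y
    rw [hφ, hf', mul_smul]
  change diracOp ι φ x = _
  simp only [hφ']
  rw [diracOp_smul ι (hasGradientAt_conformalFactor_inv_smul_rpow ε _ x)
      (hasFDerivAt_one_sub_smul_mul ι _ φ₀ x).differentiableAt,
    diracOp_one_sub_smul_mul ι hι, map_smul, map_smul, smul_mul_assoc, smul_mul_assoc,
    map_mul_one_sub_smul_mul hι, hf', Fintype.card_fin, sub_mul, one_mul, smul_mul_assoc]
  have hF := conformalFactor_mul_one_add_norm_sq (ε⁻¹ • x)
  rw [norm_smul, mul_pow, Real.norm_eq_abs, sq_abs] at hF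
  have hσσ : σ * σ = 1 := by rcases hσ with rfl | rfl <;> norm_num
  set F := conformalFactor (ε⁻¹ • x)
  set G := F ^ ((n : ℝ) / 2)
  -- the two goals compare the coefficients of `ι x * φ₀` and of `φ₀`
  match_scalars
  · linear_combination (n / 2 * ε⁻¹ ^ 2 * F * G) * hσσ
  · linear_combination (-(G * n * σ * ε⁻¹ / 2)) * hF

/-- The test spinors `φ(x) = f(x/ε)^{n/2} (1 ∓ x/ε)·φ₀` transferred from the Killing
spinors of the sphere satisfy the Killing-type Dirac equation
`Dφ(x) = ±(n/(2ε)) f(x/ε) φ(x)`, where `f(x) = 2/(1+‖x‖²)` and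
`Dφ(x) = ∑ᵢ ι(eᵢ) * ∂ᵢφ(x)` is the Euclidean Dirac operator.  The sign `σ ∈ {1, -1}`
encodes the choice `∓`: for `σ = 1` we take `(1 - ε⁻¹ ι(x))` with eigenvalue
`+(n/(2ε)) f`, and for `σ = -1` we take `(1 + ε⁻¹ ι(x))` with eigenvalue `-(n/(2ε)) f`.

Since `fderiv` requires a normed codomain and the Clifford algebra of the
negative-definite form `Q(v) = -‖v‖²` carries no canonical norm in Mathlib, we state
this for an arbitrary normed `ℝ`-algebra `A` together with a linear map
`ι : ℝⁿ →ₗ[ℝ] A` satisfying the defining Clifford relation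
`ι(v) * ι(v) = Q(v)·1 = -‖v‖²·1` (so that `ι(eᵢ)² = -1`); the canonical embedding of
`ℝⁿ` into `CliffordAlgebra Q` is exactly such a map. -/
theorem killing_type_dirac_equation (n : ℕ) (hn : 1 ≤ n)
    (A : Type*) [NormedRing A] [NormedAlgebra ℝ A]
    (ι : EuclideanSpace ℝ (Fin n) →ₗ[ℝ] A)
    (hι : ∀ v : EuclideanSpace ℝ (Fin n), ι v * ι v = algebraMap ℝ A (-‖v‖ ^ 2))
    (f : EuclideanSpace ℝ (Fin n) → ℝ)
    (hf : ∀ x, f x = 2 / (1 + ‖x‖ ^ 2))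
    (ε : ℝ) (hε : 0 < ε) (φ₀ : A)
    (σ : ℝ) (hσ : σ = 1 ∨ σ = -1)
    (φ : EuclideanSpace ℝ (Fin n) → A)
    (hφ : ∀ x, φ x =
      (f (ε⁻¹ • x)) ^ ((n : ℝ) / 2) • (((1 : A) - σ • (ε⁻¹ • ι x)) * φ₀))
    (x : EuclideanSpace ℝ (Fin n)) :
    ∑ i : Fin n,
      ι (EuclideanSpace.single i (1 : ℝ)) *
        fderiv ℝ φ x (EuclideanSpace.single i (1 : ℝ)) =
      (σ * (n / (2 * ε)) * f (ε⁻¹ • x)) • φ x :=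
  killing_type_dirac_equation_general n A ι hι f hf ε φ₀ σ hσ φ hφ x
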